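/- arXiv:0812.2386 — 4 statements merged into one kernel-verified Lean document; each statement's English description precedes it below -/
import Mathlib

section
/- (Gale–Ryser) Let d = (d_1, …, d_m) and d' = (d'_1, …, d'_n) be lists of non-negative integers with d_1 ≥ … ≥ d_m, d'_1 ≥ … ≥ d'_n, and ∑_{i=1}^m d_i = ∑_{j=1}^n d'_j. Then there exists a simple bipartite graph on vertex parts A = {a_1,…,a_m} and B = {b_1,…,b_n} (all edges joining A to B) in which a_i has degree d_i for each i and b_j has degree d'_j for each j, if and only if for every s with 1 ≤ s ≤ n one has ∑_{i=1}^m min{d_i, s} ≥ ∑_{j=1}^s d'_j. -/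
/-!
Necessity is double counting: the first `s` columns of the biadjacency matrix take at most
`min (d i) s` ones from row `i`.

For sufficiency, start from the Ferrers matrix, whose row `i` has its `d i` ones flush left. Its
column sums `c` form the conjugate sequence, with `∑_{j<s} c j = ∑ i, min (d i) s`, so the
hypothesis says that `c` dominates `d'`. While `c ≠ d'`, let `k` be the first column with
`c k < d' k` and `j < k` a column with `c j > d' j`; as `d'` is antitone, `c k < c j`, so some row
has a one in column `j` and a zero in column `k`. Moving that one keeps the matrix `0/1`, keeps the
dominance of `d'`, and strictly decreases `∑_s ∑_{t<s} c t`.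
-/

open Finset

namespace GaleRyser

lemma le_of_sum_le_sum_min {ι : Type*} {s : Finset ι} {f : ι → ℕ} {N : ℕ}
    (h : ∑ i ∈ s, f i ≤ ∑ i ∈ s, min (f i) N) {i : ι} (hi : i ∈ s) : f i ≤ N :=
  min_eq_left_iff.1 <| (sum_eq_sum_iff_of_le fun _ _ => min_le_left _ N).1
    (le_antisymm (sum_le_sum fun _ _ => min_le_left _ _) h) i hi

section Realizability

variable {α β : Type*} [Fintype α] [Fintype β]

def Realizable (r : α → ℕ) (c : β → ℕ) : Prop :=
  ∃ M : α → β → ℕ, (∀ i j, M i j ≤ 1) ∧ (∀ i, ∑ j, M i j = r i) ∧ ∀ j, ∑ i, M i j = c j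

-- Column sums are written as `b + Pi.single j 1` so that no truncated subtraction occurs.
lemma Realizable.transfer [DecidableEq β] {r : α → ℕ} {b : β → ℕ} {j k : β}
    (h : Realizable r (b + Pi.single j 1)) (hbk : b k ≤ b j) :
    Realizable r (b + Pi.single k 1) := by
  classical
  obtain ⟨M, hM, hrow, hcol⟩ := h
  obtain rfl | hjk := eq_or_ne j k
  · exact ⟨M, hM, hrow, hcol⟩
  obtain ⟨i, hij, hik⟩ : ∃ i, M i j = 1 ∧ M i k = 0 := by
    by_contra! hne
    have : ∑ i, M i j ≤ ∑ i, M i k := sum_le_sum fun i _ => by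
      have := hM i j; have := hM i k; have := hne i; omega
    have := hcol j; have := hcol k
    simp [hjk.symm] at *
    omega
  set M' := Function.update M i (M i ∘ Equiv.swap j k)
  have hcol' : ∀ t, ∑ i', M' i' t + M i t = ∑ i', M i' t + M i (Equiv.swap j k t) := by
    intro t
    have hrest : ∑ i' ∈ {i}ᶜ, M' i' t = ∑ i' ∈ {i}ᶜ, M i' t :=
      sum_congr rfl fun i' hi' => by
        simp [M', Function.update_of_ne (by simpa using hi' : i' ≠ i)]
    rw [Fintype.sum_eq_add_sum_compl i, Fintype.sum_eq_add_sum_compl i (M · t), hrest]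
    simp only [M', Function.update_self, Function.comp_apply]
    ring
  refine ⟨M', fun i' t => ?_, fun i' => ?_, fun t => ?_⟩
  · obtain rfl | hi := eq_or_ne i' i <;> simp [M', *]
  · obtain rfl | hi := eq_or_ne i' i
    · simpa [M'] using (Equiv.sum_comp (Equiv.swap j k) (M i')).trans (hrow i')
    · simpa [M', hi] using hrow i'
  · have h1 := hcol' t
    have h2 := hcol t
    obtain rfl | htj := eq_or_ne t j
    · simp [hjk] at h1 h2 ⊢; omega
    obtain rfl | htk := eq_or_ne t k
    · simp [hjk.symm] at h1 h2 ⊢; omega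
    simp [htj, htk, Equiv.swap_apply_of_ne_of_ne] at h1 h2 ⊢; omega

variable {n : ℕ}

def prefixSum (c : Fin n → ℕ) (s : ℕ) : ℕ :=
  ∑ j ∈ univ.filter (fun j : Fin n => (j : ℕ) < s), c j

lemma prefixSum_add (a b : Fin n → ℕ) (s : ℕ) :
    prefixSum (a + b) s = prefixSum a s + prefixSum b s :=
  sum_add_distrib

lemma prefixSum_single_one (t : Fin n) (s : ℕ) :
    prefixSum (Pi.single t 1) s = if (t : ℕ) < s then 1 else 0 := by
  simp [prefixSum, sum_pi_single']

lemma prefixSum_of_le (c : Fin n → ℕ) {s : ℕ} (hs : n ≤ s) : prefixSum c s = ∑ j, c j := by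
  rw [prefixSum, filter_true_of_mem fun j _ => j.isLt.trans_le hs]

lemma Realizable.prefixSum_le {r : α → ℕ} {c : Fin n → ℕ} (h : Realizable r c) (s : ℕ) :
    prefixSum c s ≤ ∑ i, min (r i) s := by
  obtain ⟨M, hM, hrow, hcol⟩ := h
  calc prefixSum c s = ∑ i, prefixSum (M i) s := by
        simp only [prefixSum, ← hcol]; exact sum_comm
    _ ≤ ∑ i, min (r i) s := sum_le_sum fun i _ => le_min
        (hrow i ▸ sum_le_sum_of_subset (filter_subset _ _))
        (calc prefixSum (M i) s ≤ prefixSum 1 s := sum_le_sum fun j _ => hM i j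
          _ = min n s := by simp [prefixSum, Fin.card_filter_val_lt]
          _ ≤ s := min_le_right _ _)

def conjugate (r : α → ℕ) (j : Fin n) : ℕ := #{i | (j : ℕ) < r i}

lemma realizable_conjugate {r : α → ℕ} (hr : ∀ i, r i ≤ n) :
    Realizable r (conjugate (n := n) r) :=
  ⟨fun i j => if (j : ℕ) < r i then 1 else 0, fun _ _ => by dsimp only; split_ifs <;> simp,
    fun i => by rw [← card_filter, Fin.card_filter_val_lt, min_eq_right (hr i)],
    fun j => (card_filter _ _).symm⟩

lemma prefixSum_conjugate {r : α → ℕ} (hr : ∀ i, r i ≤ n) (s : ℕ) :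
    prefixSum (conjugate (n := n) r) s = ∑ i, min (r i) s := by
  simp only [prefixSum, conjugate, card_filter]
  rw [sum_comm]
  refine sum_congr rfl fun i _ => ?_
  rw [sum_filter]
  simp only [← ite_and, ← lt_min_iff]
  rw [← card_filter, Fin.card_filter_val_lt]
  have := hr i
  omega

lemma exists_transfer {c d : Fin n → ℕ} (hd : Antitone d)
    (hdom : ∀ s, prefixSum d s ≤ prefixSum c s) (htot : ∑ j, c j = ∑ j, d j) (hne : c ≠ d) :
    ∃ j k : Fin n, j < k ∧ c k < c j ∧
      ∀ s : ℕ, (j : ℕ) < s → s ≤ k → prefixSum d s < prefixSum c s := by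
  obtain ⟨k, hk, hkmin⟩ : ∃ k, c k < d k ∧ ∀ t < k, d t ≤ c t := by
    have : ∃ k, c k < d k := by
      by_contra! h
      exact hne <| funext fun t =>
        ((sum_eq_sum_iff_of_le fun t _ => h t).1 htot.symm t (mem_univ t)).symm
    obtain ⟨k, hk⟩ := exists_minimal_of_wellFoundedLT _ this
    exact ⟨k, hk.prop, fun t ht => not_lt.1 (hk.not_prop_of_lt ht)⟩
  obtain ⟨j, hjk, hj⟩ : ∃ j < k, d j < c j := by
    by_contra! h
    refine (hdom (k + 1)).not_gt (sum_lt_sum (fun t ht => ?_) ⟨k, by simp, hk⟩)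
    simp only [mem_filter, mem_univ, true_and] at ht
    obtain ht | ht := Nat.lt_succ_iff_lt_or_eq.1 ht
    · exact h t ht
    · exact (Fin.ext ht ▸ hk).le
  refine ⟨j, k, hjk, hk.trans ((hd hjk.le).trans_lt hj),
    fun s hjs hsk => sum_lt_sum (fun t ht => hkmin t ?_) ⟨j, by simpa using hjs, hj⟩⟩
  simp only [mem_filter, mem_univ, true_and] at ht
  exact Fin.lt_def.2 (ht.trans_le hsk)

lemma Realizable.exists_closer {r : α → ℕ} {c d : Fin n → ℕ} (hd : Antitone d)
    (hc : Realizable r c) (hdom : ∀ s, prefixSum d s ≤ prefixSum c s)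
    (htot : ∑ j, c j = ∑ j, d j) (hne : c ≠ d) :
    ∃ c' : Fin n → ℕ, Realizable r c' ∧ (∀ s, prefixSum d s ≤ prefixSum c' s) ∧
      ∑ j, c' j = ∑ j, d j ∧
      ∑ s ∈ range (n + 1), prefixSum c' s < ∑ s ∈ range (n + 1), prefixSum c s := by
  obtain ⟨j, k, hjk, hkj, hgap⟩ := exists_transfer hd hdom htot hne
  obtain ⟨b, rfl⟩ : ∃ b, c = b + Pi.single j 1 :=
    ⟨c - Pi.single j 1, funext fun t => by
      obtain rfl | ht := eq_or_ne t j
      · simp only [Pi.add_apply, Pi.sub_apply, Pi.single_eq_same]; omega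
      · simp [ht]⟩
  have hjk' : (j : ℕ) < k := hjk
  have hb : b k ≤ b j := by simp [hjk.ne'] at hkj; omega
  have hpsum : ∀ (t : Fin n) s,
      prefixSum (b + Pi.single t 1) s = prefixSum b s + if (t : ℕ) < s then 1 else 0 :=
    fun t s => by rw [prefixSum_add, prefixSum_single_one]
  refine ⟨b + Pi.single k 1, hc.transfer hb, fun s => ?_, ?_, ?_⟩
  · have := hdom s
    have := hgap s
    simp only [hpsum] at *
    split_ifs at * <;> omega
  · simpa [sum_add_distrib] using htot
  · refine sum_lt_sum (fun s _ => ?_) ⟨k, mem_range.2 (by omega), ?_⟩ <;>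
      simp only [hpsum] <;> split_ifs <;> omega

theorem Realizable.of_dominates {r : α → ℕ} {c d : Fin n → ℕ} (hd : Antitone d)
    (hc : Realizable r c) (hdom : ∀ s, prefixSum d s ≤ prefixSum c s)
    (htot : ∑ j, c j = ∑ j, d j) : Realizable r d := by
  by_cases hne : c = d
  · exact hne ▸ hc
  obtain ⟨c', hc', hdom', htot', hlt⟩ := hc.exists_closer hd hdom htot hne
  exact hc'.of_dominates hd hdom' htot'
termination_by ∑ s ∈ range (n + 1), prefixSum c s
decreasing_by exact hlt

end Realizability

section Bipartite

variable {α β : Type*} [Fintype α] [Fintype β]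

lemma degree_inl_eq_sum (G : SimpleGraph (α ⊕ β)) [DecidableRel G.Adj]
    (hG : ∀ u v, G.Adj u v → u.isLeft ≠ v.isLeft) (i : α) :
    G.degree (.inl i) = ∑ j, if G.Adj (.inl i) (.inr j) then 1 else 0 := by
  have : ∀ i', ¬G.Adj (.inl i) (.inl i') := fun i' h => hG _ _ h rfl
  rw [← SimpleGraph.card_neighborFinset_eq_degree, SimpleGraph.neighborFinset_eq_filter,
    card_filter, Fintype.sum_sum_type]
  simp [this]

lemma degree_inr_eq_sum (G : SimpleGraph (α ⊕ β)) [DecidableRel G.Adj]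
    (hG : ∀ u v, G.Adj u v → u.isLeft ≠ v.isLeft) (j : β) :
    G.degree (.inr j) = ∑ i, if G.Adj (.inl i) (.inr j) then 1 else 0 := by
  have : ∀ j', ¬G.Adj (.inr j) (.inr j') := fun j' h => hG _ _ h rfl
  rw [← SimpleGraph.card_neighborFinset_eq_degree, SimpleGraph.neighborFinset_eq_filter,
    card_filter, Fintype.sum_sum_type]
  simp [this, G.adj_comm (.inr j)]

lemma exists_bipartite_iff_realizable (r : α → ℕ) (c : β → ℕ) :
    (∃ (G : SimpleGraph (α ⊕ β)) (_ : DecidableRel G.Adj),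
        (∀ u v, G.Adj u v → u.isLeft ≠ v.isLeft) ∧
        (∀ i, G.degree (.inl i) = r i) ∧ ∀ j, G.degree (.inr j) = c j) ↔
      Realizable r c := by
  constructor
  · rintro ⟨G, _, hG, hr, hc⟩
    exact ⟨fun i j => if G.Adj (.inl i) (.inr j) then 1 else 0,
      fun _ _ => by dsimp only; split_ifs <;> simp,
      fun i => (degree_inl_eq_sum G hG i).symm.trans (hr i),
      fun j => (degree_inr_eq_sum G hG j).symm.trans (hc j)⟩
  · rintro ⟨M, hM, hr, hc⟩
    classical
    let G := SimpleGraph.fromRel fun (u v : α ⊕ β) =>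
      ∃ i j, u = .inl i ∧ v = .inr j ∧ M i j = 1
    have hG : ∀ u v, G.Adj u v → u.isLeft ≠ v.isLeft := by
      rintro u v ⟨-, ⟨i, j, rfl, rfl, -⟩ | ⟨i, j, rfl, rfl, -⟩⟩ <;> simp
    have hGM : ∀ i j, (if G.Adj (.inl i) (.inr j) then 1 else 0) = M i j := fun i j => by
      have hadj : G.Adj (.inl i) (.inr j) ↔ M i j = 1 := by simp [G]
      have := hM i j
      split_ifs with h <;> rw [hadj] at h <;> omega
    refine ⟨G, inferInstance, hG, fun i => ?_, fun j => ?_⟩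
    · simp only [degree_inl_eq_sum G hG, hGM, hr]
    · simp only [degree_inr_eq_sum G hG, hGM, hc]

end Bipartite

end GaleRyser

open GaleRyser in
theorem gale_ryser_general (m n : ℕ) (d : Fin m → ℕ) (d' : Fin n → ℕ)
    (hd' : Antitone d')
    (hsum : ∑ i, d i = ∑ j, d' j) :
    (∃ (G : SimpleGraph (Fin m ⊕ Fin n)) (_ : DecidableRel G.Adj),
        (∀ u v, G.Adj u v → u.isLeft ≠ v.isLeft) ∧
        (∀ i : Fin m, G.degree (Sum.inl i) = d i) ∧
        (∀ j : Fin n, G.degree (Sum.inr j) = d' j)) ↔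
      (∀ s : ℕ, 1 ≤ s → s ≤ n →
        ∑ j ∈ univ.filter (fun j : Fin n => (j : ℕ) < s), d' j ≤ ∑ i, min (d i) s) := by
  rw [exists_bipartite_iff_realizable]
  refine ⟨fun h s _ _ => h.prefixSum_le s, fun h => ?_⟩
  have h : ∀ s, 1 ≤ s → s ≤ n → prefixSum d' s ≤ ∑ i, min (d i) s := h
  have hdn : ∀ i, d i ≤ n := fun i => le_of_sum_le_sum_min (s := univ) (by
    rcases n.eq_zero_or_pos with rfl | hn
    · simp [hsum]
    · simpa [hsum, prefixSum_of_le] using h n hn le_rfl) (mem_univ i)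
  have hmin : ∀ s, n ≤ s → ∑ i, min (d i) s = ∑ j, d' j := fun s hs => by
    rw [← hsum]; exact sum_congr rfl fun i _ => min_eq_left ((hdn i).trans hs)
  refine (realizable_conjugate hdn).of_dominates hd' (fun s => ?_) ?_
  · rw [prefixSum_conjugate hdn]
    rcases Nat.eq_zero_or_pos s with rfl | hs
    · simp [prefixSum]
    rcases le_or_gt s n with hsn | hsn
    · exact h s hs hsn
    · rw [prefixSum_of_le _ hsn.le, hmin s hsn.le]
  · rw [← prefixSum_of_le _ le_rfl, prefixSum_conjugate hdn, hmin n le_rfl]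

/-- **Gale–Ryser theorem.** Given antitone lists `d : Fin m → ℕ` and `d' : Fin n → ℕ`
with equal sums, there is a simple bipartite graph on parts `Fin m` and `Fin n`
(all edges joining the two parts) whose degree sequences on the two sides are `d`
and `d'` respectively, if and only if for every `1 ≤ s ≤ n` one has
`∑_{j < s} d'_j ≤ ∑ i, min (d i) s`. -/
theorem gale_ryser (m n : ℕ) (d : Fin m → ℕ) (d' : Fin n → ℕ)
    (hd : Antitone d) (hd' : Antitone d')
    (hsum : ∑ i, d i = ∑ j, d' j) :
    (∃ (G : SimpleGraph (Fin m ⊕ Fin n)) (_ : DecidableRel G.Adj),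
        (∀ u v, G.Adj u v → u.isLeft ≠ v.isLeft) ∧
        (∀ i : Fin m, G.degree (Sum.inl i) = d i) ∧
        (∀ j : Fin n, G.degree (Sum.inr j) = d' j)) ↔
      (∀ s : ℕ, 1 ≤ s → s ≤ n →
        ∑ j ∈ univ.filter (fun j : Fin n => (j : ℕ) < s), d' j ≤ ∑ i, min (d i) s) :=
  gale_ryser_general m n d d' hd' hsum
end

section
/- Let a ≥ 1 be a real number and let d = (d_1, …, d_m) be a list of non-negative integers with d_1 ≥ … ≥ d_m. If d_1 ≤ a·d_m and d_1 ≤ 4am/(a+1)², then there exists a simple bipartite graph on parts A = {a_1,…,a_m} and B = {b_1,…,b_m} (all edges joining A to B) in which a_i has degree d_i and b_i has degree d_i for every 1 ≤ i ≤ m. -/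
/-!
Gale–Ryser: row sums `r` and column sums `c` with equal totals are realized by a 0/1 matrix as
soon as `∑_{i ∈ t} r i ≤ ∑_j min (c j) |t|` for every set `t` of rows. Greedily, one row `i₀`
is joined to the `r i₀` columns of largest demand, and the condition survives for the rest.

For `r = c = d` with `D = d₁`, `δ = d_m` and `k = |t| < D`, the rows of `t` exceed their share of
the right-hand side by at most `k (D - k)`, while the `m - k` columns outside `t` contribute at
least `(m - k) min δ k`. The hypotheses give `a (D + δ)² ≤ D δ (a + 1)² ≤ 4 a m δ` (the first
step is `(a δ - D)(a D - δ) ≥ 0`), so `(m - k) δ - k (D - k) ≥ (k - (D + δ) / 2)² ≥ 0`.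
-/

open Finset

theorem Finset.exists_card_eq_forall_notMem_le {β γ : Type*} [Fintype β] [DecidableEq β]
    [LinearOrder γ] (f : β → γ) {q : ℕ} (hq : q ≤ Fintype.card β) :
    ∃ S : Finset β, #S = q ∧ ∀ j ∈ S, ∀ j' ∉ S, f j' ≤ f j := by
  induction q with
  | zero => exact ⟨∅, rfl, by simp⟩
  | succ q ih =>
    obtain ⟨S, hcard, hS⟩ := ih (by omega)
    obtain ⟨j₀, hj₀, hmax⟩ := Sᶜ.exists_max_image f (by rw [← card_pos, card_compl]; omega)
    rw [mem_compl] at hj₀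
    refine ⟨insert j₀ S, by rw [card_insert_of_notMem hj₀, hcard], fun j hj j' hj' => ?_⟩
    rw [mem_insert, not_or] at hj'
    rcases mem_insert.mp hj with rfl | hj
    · exact hmax j' (mem_compl.mpr hj'.2)
    · exact hS j hj j' hj'.2

section GaleRyser

variable {α β : Type*} [Fintype β]

def GaleRyserCondition (s : Finset α) (r : α → ℕ) (c : β → ℕ) : Prop :=
  ∀ t ⊆ s, ∑ i ∈ t, r i ≤ ∑ j, min (c j) #t

variable [DecidableEq β]

theorem pos_of_mem_of_forall_notMem_le {c : β → ℕ} {S : Finset β}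
    (hS : ∀ j ∈ S, ∀ j' ∉ S, c j' ≤ c j) (hcard : #S ≤ #{j | 0 < c j}) {j : β} (hj : j ∈ S) :
    0 < c j := by
  by_contra! h0
  have hsub : ({j | 0 < c j} : Finset β) ⊆ S.erase j := fun j' hj' => by
    rw [mem_filter] at hj'
    refine mem_erase.mpr ⟨by rintro rfl; omega, ?_⟩
    by_contra hj'S
    have := hS j hj j' hj'S
    omega
  have := card_le_card hsub
  rw [card_erase_of_mem hj] at this
  have := card_pos.mpr ⟨j, hj⟩
  omega

theorem GaleRyserCondition.of_insert [DecidableEq α] {s : Finset α} {i₀ : α} {r : α → ℕ}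
    {c : β → ℕ} {S : Finset β} (hcond : GaleRyserCondition (insert i₀ s) r c) (hi₀ : i₀ ∉ s)
    (hS : #S = r i₀) (htop : ∀ j ∈ S, ∀ j' ∉ S, c j' ≤ c j) (hpos : ∀ j ∈ S, 0 < c j) :
    GaleRyserCondition s r (fun j => c j - if j ∈ S then 1 else 0) := by
  intro t hts
  beta_reduce
  -- Either no greedy column drops to `#t` and `t` sees no change, or every column outside `S`
  -- is capped by `#t`, and the condition for `insert i₀ t` pays exactly for the removed row.
  by_cases hbig : ∀ j ∈ S, #t < c j
  · calc ∑ i ∈ t, r i ≤ ∑ j, min (c j) #t := hcond t (hts.trans (subset_insert _ _))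
      _ = _ := sum_congr rfl fun j _ => by
        split_ifs with hj
        · have := hbig j hj; omega
        · simp
  · obtain ⟨j₁, hj₁S, hj₁⟩ : ∃ j ∈ S, c j ≤ #t := by simpa using hbig
    have hi₀t : i₀ ∉ t := fun h => hi₀ (hts h)
    have hsplit : ∑ j, min (c j) (#t + 1)
        = ∑ j, min (c j - if j ∈ S then 1 else 0) #t + ∑ j, if j ∈ S then 1 else 0 := by
      rw [← sum_add_distrib]
      refine sum_congr rfl fun j _ => ?_
      split_ifs with hj
      · have := hpos j hj; omega
      · have := (htop j₁ hj₁S j hj).trans hj₁; omega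
    have h := hcond (insert i₀ t) (insert_subset_insert _ hts)
    rw [sum_insert hi₀t, card_insert_of_notMem hi₀t, hsplit] at h
    simp only [sum_boole, filter_mem_eq_inter, univ_inter, Nat.cast_id, hS] at h
    omega

theorem GaleRyserCondition.exists_realization [DecidableEq α] {s : Finset α} {r : α → ℕ}
    {c : β → ℕ} (hcond : GaleRyserCondition s r c) (hsum : ∑ i ∈ s, r i = ∑ j, c j) :
    ∃ N : α → Finset β, (∀ i ∈ s, #(N i) = r i) ∧ ∀ j, #{i ∈ s | j ∈ N i} = c j := by
  induction s using Finset.induction_on generalizing c with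
  | empty =>
    refine ⟨fun _ => ∅, by simp, fun j => ?_⟩
    rw [sum_empty, eq_comm, sum_eq_zero_iff] at hsum
    simp [hsum j]
  | insert i₀ s hi₀ ih =>
    have hr₀ : r i₀ ≤ #{j | 0 < c j} := by
      calc r i₀ ≤ ∑ j, min (c j) 1 := by simpa using hcond {i₀} (by simp)
        _ = #{j | 0 < c j} := by
          rw [card_filter]
          exact sum_congr rfl fun j _ => by split_ifs <;> omega
    obtain ⟨S, hS, htop⟩ := exists_card_eq_forall_notMem_le c (hr₀.trans (card_le_univ _))
    have hpos j (hj : j ∈ S) : 0 < c j := pos_of_mem_of_forall_notMem_le htop (hS ▸ hr₀) hj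
    have hc' j : (c j - if j ∈ S then 1 else 0) + (if j ∈ S then 1 else 0) = c j := by
      split_ifs with hj
      · have := hpos j hj; omega
      · rfl
    have hsum' : ∑ i ∈ s, r i = ∑ j, (c j - if j ∈ S then 1 else 0) := by
      have h : ∑ j, (c j - if j ∈ S then 1 else 0) + ∑ j, (if j ∈ S then 1 else 0) = ∑ j, c j := by
        rw [← sum_add_distrib]
        exact sum_congr rfl fun j _ => hc' j
      rw [sum_insert hi₀, ← h, sum_boole, filter_mem_eq_inter, univ_inter, Nat.cast_id, hS] at hsum
      omega
    obtain ⟨N, hrow, hcol⟩ := ih (hcond.of_insert hi₀ hS htop hpos) hsum'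
    refine ⟨Function.update N i₀ S, fun i hi => ?_, fun j => ?_⟩
    · rcases mem_insert.mp hi with rfl | hi
      · simpa using hS
      · rw [Function.update_of_ne (ne_of_mem_of_not_mem hi hi₀), hrow i hi]
    · have hs : {i ∈ s | j ∈ Function.update N i₀ S i} = {i ∈ s | j ∈ N i} :=
        filter_congr fun i hi => by rw [Function.update_of_ne (ne_of_mem_of_not_mem hi hi₀)]
      rw [filter_insert, Function.update_self, hs, ← hc' j, ← hcol j]
      split_ifs with hj
      · exact card_insert_of_notMem (by simp [hi₀])
      · rfl

end GaleRyser

namespace SimpleGraph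
variable {α β : Type*}

def bipartiteOfRel (R : α → β → Prop) : SimpleGraph (α ⊕ β) where
  Adj
  | .inl a, .inr b | .inr b, .inl a => R a b
  | _, _ => False
  symm.symm _ _ := by grind

instance (R : α → β → Prop) [h : ∀ a, DecidablePred (R a)] : DecidableRel (bipartiteOfRel R).Adj
  | .inl a, .inr b | .inr b, .inl a => h a b
  | .inl _, .inl _ | .inr _, .inr _ => inferInstanceAs (Decidable False)

variable {R : α → β → Prop}

@[simp] theorem bipartiteOfRel_adj_inl_inr {a : α} {b : β} :
    (bipartiteOfRel R).Adj (.inl a) (.inr b) ↔ R a b := .rfl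

@[simp] theorem bipartiteOfRel_adj_inr_inl {a : α} {b : β} :
    (bipartiteOfRel R).Adj (.inr b) (.inl a) ↔ R a b := .rfl

@[simp] theorem not_bipartiteOfRel_adj_inl_inl {a a' : α} :
    ¬(bipartiteOfRel R).Adj (.inl a) (.inl a') := id

@[simp] theorem not_bipartiteOfRel_adj_inr_inr {b b' : β} :
    ¬(bipartiteOfRel R).Adj (.inr b) (.inr b') := id

theorem isLeft_ne_of_adj_bipartiteOfRel {u v : α ⊕ β} (h : (bipartiteOfRel R).Adj u v) :
    u.isLeft ≠ v.isLeft := by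
  cases u <;> cases v <;> simp_all

variable [Fintype α] [Fintype β] [∀ a, DecidablePred (R a)]

theorem degree_bipartiteOfRel_inl (a : α) :
    (bipartiteOfRel R).degree (.inl a) = #{b | R a b} := by
  rw [← card_neighborFinset_eq_degree, ← card_map (.inr : β ↪ α ⊕ β)]
  congr 1
  ext (_ | b) <;> simp

theorem degree_bipartiteOfRel_inr (b : β) :
    (bipartiteOfRel R).degree (.inr b) = #{a | R a b} := by
  rw [← card_neighborFinset_eq_degree, ← card_map (.inl : α ↪ α ⊕ β)]
  congr 1
  ext (a | _) <;> simp

end SimpleGraph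

theorem add_sq_le_four_mul_mul {a D δ m : ℝ} (ha : 0 < a) (hδ : 0 ≤ δ) (hDδ : D ≤ a * δ)
    (hδD : δ ≤ a * D) (hm : D ≤ 4 * a * m / (a + 1) ^ 2) : (D + δ) ^ 2 ≤ 4 * m * δ := by
  rw [le_div_iff₀ (by positivity)] at hm
  have hprod : a * (D + δ) ^ 2 ≤ D * δ * (a + 1) ^ 2 := by
    nlinarith [mul_nonneg (sub_nonneg.2 hDδ) (sub_nonneg.2 hδD)]
  have : a * (D + δ) ^ 2 ≤ a * (4 * m * δ) := by nlinarith [mul_le_mul_of_nonneg_right hm hδ]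
  exact le_of_mul_le_mul_left this ha

theorem mul_sub_le_sub_mul_min {k m D δ : ℕ} (hkm : k ≤ m) (hkD : k < D)
    (hsq : (D + δ) ^ 2 ≤ 4 * m * δ) : k * (D - k) ≤ (m - k) * min δ k := by
  have hδ : 0 < δ := by
    by_contra! h
    simp_all
  have hDm : D ≤ m := by nlinarith [sq_nonneg ((D : ℤ) - δ)]
  rcases le_total k δ with hkδ | hδk
  · rw [min_eq_right hkδ, mul_comm]
    exact Nat.mul_le_mul_right k (Nat.sub_le_sub_right hDm k)
  · rw [min_eq_left hδk]
    zify [hkm, hkD.le]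
    nlinarith [sq_nonneg (2 * (k : ℤ) - D - δ)]

theorem galeRyserCondition_univ_of_add_sq_le {ι : Type*} [Fintype ι] (d : ι → ℕ) {δ D : ℕ}
    (hδ : ∀ i, δ ≤ d i) (hD : ∀ i, d i ≤ D) (hsq : (D + δ) ^ 2 ≤ 4 * Fintype.card ι * δ) :
    GaleRyserCondition univ d d := by
  classical
  intro t _
  rcases le_or_gt D #t with hDt | htD
  · calc ∑ i ∈ t, d i = ∑ i ∈ t, min (d i) #t :=
          sum_congr rfl fun i _ => (min_eq_left ((hD i).trans hDt)).symm
      _ ≤ ∑ j, min (d j) #t := sum_le_univ_sum_of_nonneg fun _ => Nat.zero_le _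
  · calc ∑ i ∈ t, d i ≤ ∑ i ∈ t, (min (d i) #t + (D - #t)) :=
          sum_le_sum fun i _ => by have := hD i; omega
      _ = ∑ i ∈ t, min (d i) #t + #t * (D - #t) := by rw [sum_add_distrib, sum_const, smul_eq_mul]
      _ ≤ ∑ i ∈ t, min (d i) #t + #tᶜ * min δ #t := by
          rw [card_compl]
          exact Nat.add_le_add_left (mul_sub_le_sub_mul_min (card_le_univ t) htD hsq) _
      _ ≤ ∑ i ∈ t, min (d i) #t + ∑ j ∈ tᶜ, min (d j) #t := by
          grw [← smul_eq_mul, card_nsmul_le_sum tᶜ _ _ fun j _ => min_le_min_right #t (hδ j)]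
      _ = ∑ j, min (d j) #t := sum_add_sum_compl t _

/-- Let `a ≥ 1` be real and `d : Fin m → ℕ` antitone. If `d₁ ≤ a * dₘ` and
`d₁ ≤ 4am/(a+1)²`, then there is a simple bipartite graph on parts `Fin m` and `Fin m`
(all edges joining the parts) whose degree sequence on each side is `d`. -/
theorem bipartite_realizable_of_balanced (a : ℝ) (ha : 1 ≤ a) (m : ℕ) (hm : 0 < m)
    (d : Fin m → ℕ) (hd : Antitone d)
    (h1 : (d ⟨0, hm⟩ : ℝ) ≤ a * d ⟨m - 1, Nat.sub_lt hm one_pos⟩)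
    (h2 : (d ⟨0, hm⟩ : ℝ) ≤ 4 * a * m / (a + 1) ^ 2) :
    ∃ (G : SimpleGraph (Fin m ⊕ Fin m)) (_ : DecidableRel G.Adj),
      (∀ u v, G.Adj u v → u.isLeft ≠ v.isLeft) ∧
      (∀ i : Fin m, G.degree (Sum.inl i) = d i) ∧
      (∀ i : Fin m, G.degree (Sum.inr i) = d i) := by
  set D := d ⟨0, hm⟩
  set δ := d ⟨m - 1, Nat.sub_lt hm one_pos⟩
  have hD i : d i ≤ D := hd (Fin.le_def.2 (Nat.zero_le _))
  have hδ i : δ ≤ d i := hd (Fin.le_def.2 (Nat.le_sub_one_of_lt i.isLt))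
  have hsq : ((D + δ) ^ 2 : ℝ) ≤ 4 * m * δ :=
    add_sq_le_four_mul_mul (by linarith) (Nat.cast_nonneg δ) h1
      (by nlinarith [(Nat.cast_le (α := ℝ)).2 (hδ ⟨0, hm⟩)]) h2
  obtain ⟨N, hrow, hcol⟩ := (galeRyserCondition_univ_of_add_sq_le d hδ hD
    (by rw [Fintype.card_fin]; exact_mod_cast hsq)).exists_realization rfl
  refine ⟨SimpleGraph.bipartiteOfRel fun i j => j ∈ N i, inferInstance,
    fun _ _ => SimpleGraph.isLeft_ne_of_adj_bipartiteOfRel, fun i => ?_, fun j => ?_⟩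
  · rw [SimpleGraph.degree_bipartiteOfRel_inl, filter_mem_eq_inter, univ_inter,
      hrow i (mem_univ i)]
  · exact (SimpleGraph.degree_bipartiteOfRel_inr j).trans (hcol j)
end

section
/- Let a > 1 be a real number and m a positive integer such that s := 2m/(a+1) and e := 4m/(a+1)² are positive integers, and let d_1, …, d_m be non-negative integers with d_1 = d_2 = … = d_s, d_i = e for all s+1 ≤ i ≤ m, and d_1 > 4am/(a+1)². Then there is NO simple bipartite graph on parts A = {a_1,…,a_m} and B = {b_1,…,b_m} (all edges joining A to B) in which a_i has degree d_i and b_i has degree d_i for every 1 ≤ i ≤ m. -/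
/-!
Count the edges leaving the set `S` of the first `s` vertices of `A`. Each vertex of `S` has
degree `d₁`, while a vertex `b_j` of `B` receives at most `min(s, d_j)` of these edges, that is
at most `s` for `j ≤ s` and at most `e` otherwise. Hence `s·d₁ ≤ s² + (m - s)·e`, and for
`s = 2m/(a+1)`, `e = 4m/(a+1)²` the right-hand side is exactly `s · 4am/(a+1)²`.
-/

open Finset

namespace SimpleGraph

variable {α β : Type*} [Fintype α] [Fintype β] (G : SimpleGraph (α ⊕ β))
  [DecidableRel G.Adj]

theorem degree_inl_eq_card_adj_inr (hG : ∀ u v, G.Adj u v → u.isLeft ≠ v.isLeft) (i : α) :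
    G.degree (.inl i) = #{j | G.Adj (.inl i) (.inr j)} := by
  have hN : G.neighborFinset (.inl i) = ({j | G.Adj (.inl i) (.inr j)} : Finset β).map .inr := by
    ext (j | j)
    · simpa using hG (.inl i) (.inl j)
    · simp
  rw [← card_neighborFinset_eq_degree, hN, card_map]

theorem card_adj_inl_le_degree_inr (S : Finset α) (j : β) :
    #{i ∈ S | G.Adj (.inl i) (.inr j)} ≤ G.degree (.inr j) := by
  rw [← card_neighborFinset_eq_degree, ← card_map .inl]
  exact card_le_card fun v hv => by
    obtain ⟨i, hi, rfl⟩ := mem_map.mp hv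
    simpa [adj_comm] using (mem_filter.mp hi).2

theorem sum_degree_inl_le_sum_min (hG : ∀ u v, G.Adj u v → u.isLeft ≠ v.isLeft)
    (S : Finset α) :
    ∑ i ∈ S, G.degree (.inl i) ≤ ∑ j, min #S (G.degree (.inr j)) := by
  calc ∑ i ∈ S, G.degree (.inl i)
      = ∑ i ∈ S, #(univ.bipartiteAbove (fun i j => G.Adj (.inl i) (.inr j)) i) :=
        sum_congr rfl fun i _ => G.degree_inl_eq_card_adj_inr hG i
    _ = ∑ j, #(S.bipartiteBelow (fun i j => G.Adj (.inl i) (.inr j)) j) :=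
        sum_card_bipartiteAbove_eq_sum_card_bipartiteBelow _
    _ ≤ ∑ j, min #S (G.degree (.inr j)) :=
        sum_le_sum fun j _ => le_min (card_filter_le _ _) (G.card_adj_inl_le_degree_inr S j)

end SimpleGraph

theorem Fin.sum_ite_val_lt {M : Type*} [AddCommMonoid M] {m s : ℕ} (h : s ≤ m) (x y : M) :
    ∑ j : Fin m, (if (j : ℕ) < s then x else y) = s • x + (m - s) • y := by
  rw [Fin.sum_univ_eq_sum_range (fun j => if j < s then x else y), ← sum_range_add_sum_Ico _ h,
    sum_congr rfl fun j hj => if_pos (mem_range.mp hj),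
    sum_congr rfl fun j hj => if_neg (not_lt.mpr (mem_Ico.mp hj).1)]
  simp

theorem le_four_mul_div_sq_of_mul_le {a m s e d : ℝ} (ha : 0 < a + 1) (hs : 0 < s)
    (hsa : s = 2 * m / (a + 1)) (hea : e = 4 * m / (a + 1) ^ 2)
    (h : s * d ≤ s * s + (m - s) * e) : d ≤ 4 * a * m / (a + 1) ^ 2 := by
  have key : s * s + (m - s) * e = s * (4 * a * m / (a + 1) ^ 2) := by
    subst hsa hea; field_simp; ring
  exact le_of_mul_le_mul_left (key ▸ h) hs

theorem bipartite_not_realizable_tight_general (a : ℝ) (ha : 1 < a) (m : ℕ) (hm : 0 < m)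
    (s e : ℕ) (hs : 0 < s)
    (hsa : (s : ℝ) = 2 * m / (a + 1)) (hea : (e : ℝ) = 4 * m / (a + 1) ^ 2)
    (d : Fin m → ℕ)
    (hconst : ∀ i j : Fin m, (i : ℕ) < s → (j : ℕ) < s → d i = d j)
    (htail : ∀ i : Fin m, s ≤ (i : ℕ) → d i = e)
    (hbig : 4 * a * m / (a + 1) ^ 2 < (d ⟨0, hm⟩ : ℝ)) :
    ¬ ∃ (G : SimpleGraph (Fin m ⊕ Fin m)) (_ : DecidableRel G.Adj),
        (∀ u v, G.Adj u v → u.isLeft ≠ v.isLeft) ∧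
        (∀ i : Fin m, G.degree (Sum.inl i) = d i) ∧
        (∀ i : Fin m, G.degree (Sum.inr i) = d i) := by
  rintro ⟨G, _, hbip, hA, hB⟩
  have hsm : s ≤ m := by
    have : (s : ℝ) ≤ m := by
      rw [hsa, div_le_iff₀ (by linarith)]
      nlinarith [(Nat.cast_pos.mpr hm : (0 : ℝ) < m)]
    exact_mod_cast this
  set S : Finset (Fin m) := {i | (i : ℕ) < s}
  have hS : #S = s := by rw [Fin.card_filter_val_lt, min_eq_right hsm]
  have hlhs : ∑ i ∈ S, G.degree (.inl i) = s * d ⟨0, hm⟩ := by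
    rw [sum_congr rfl fun i hi => (hA i).trans (hconst i ⟨0, hm⟩ (mem_filter.mp hi).2 hs),
      sum_const, hS, smul_eq_mul]
  have hrhs : ∑ j, min #S (G.degree (.inr j)) ≤ s * s + (m - s) * e :=
    calc _ ≤ ∑ j : Fin m, if (j : ℕ) < s then s else e := sum_le_sum fun j _ => by
            split_ifs with hj
            · exact hS ▸ min_le_left _ _
            · exact (min_le_right _ _).trans_eq ((hB j).trans (htail j (not_lt.mp hj)))
      _ = s * s + (m - s) * e := Fin.sum_ite_val_lt hsm s e
  have hcount : (s : ℝ) * d ⟨0, hm⟩ ≤ s * s + (m - s) * e := by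
    have := hlhs ▸ (G.sum_degree_inl_le_sum_min hbip S).trans hrhs
    rw [← Nat.cast_sub hsm]
    exact_mod_cast this
  exact (le_four_mul_div_sq_of_mul_le (by linarith) (by exact_mod_cast hs) hsa hea hcount).not_gt
    hbig

/-- Tightness of the condition `d₁ ≤ min {a·dₘ, 4am/(a+1)²}`: for `a > 1`, if
`s = 2m/(a+1)` and `e = 4m/(a+1)²` are positive integers, `d₁ = ⋯ = d_s`,
`d_i = e` for all `s+1 ≤ i ≤ m`, and `d₁ > 4am/(a+1)²`, then no simple bipartite
graph on parts `Fin m` and `Fin m` has degree sequence `d` on both sides. -/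
theorem bipartite_not_realizable_tight (a : ℝ) (ha : 1 < a) (m : ℕ) (hm : 0 < m)
    (s e : ℕ) (hs : 0 < s) (he : 0 < e)
    (hsa : (s : ℝ) = 2 * m / (a + 1)) (hea : (e : ℝ) = 4 * m / (a + 1) ^ 2)
    (d : Fin m → ℕ)
    (hconst : ∀ i j : Fin m, (i : ℕ) < s → (j : ℕ) < s → d i = d j)
    (htail : ∀ i : Fin m, s ≤ (i : ℕ) → d i = e)
    (hbig : 4 * a * m / (a + 1) ^ 2 < (d ⟨0, hm⟩ : ℝ)) :
    ¬ ∃ (G : SimpleGraph (Fin m ⊕ Fin m)) (_ : DecidableRel G.Adj),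
        (∀ u v, G.Adj u v → u.isLeft ≠ v.isLeft) ∧
        (∀ i : Fin m, G.degree (Sum.inl i) = d i) ∧
        (∀ i : Fin m, G.degree (Sum.inr i) = d i) :=
  bipartite_not_realizable_tight_general a ha m hm s e hs hsa hea d hconst htail hbig
end

section
/- For every positive integer k divisible by 5 and every even non-negative integer r with r ≤ 2k/5, there exists a simple graph on k vertices that is triangle-free and r-regular. -/
/-!
Write `k = 5m` and `r = 2n` with `n ≤ m`, and pick any `n`-element set `T ⊆ ZMod m`. The Cayley
graph of `ZMod 5 × ZMod m` with generators `{1} × T` joins `(i, x)` to `(i ± 1, x ± t)` for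
`t ∈ T`; it is a subgraph of the blow-up of `C₅` by `m`, and it is `2n`-regular because `1 ≠ -1`
in `ZMod 5`. The first coordinates of the three edges of a triangle would be three signs `±1`
summing to `0` in `ZMod 5`, which is impossible.
-/

open Finset
open scoped Pointwise

namespace SimpleGraph

variable {A : Type*} [AddCommGroup A]

theorem addCayley_adj_iff_sub_mem {s : Set A} (hs : (0 : A) ∉ s) {u v : A} :
    (addCayley s).Adj u v ↔ v - u ∈ s ∪ -s := by
  rw [addCayley_adj, Set.mem_union, Set.mem_neg, neg_sub, neg_add_eq_sub, neg_add_eq_sub,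
    and_iff_right_iff_imp]
  rintro h rfl
  simp only [sub_self, or_self] at h
  exact hs h

theorem cliqueFree_three_addCayley {s : Set A}
    (hs : ∀ a ∈ s ∪ -s, ∀ b ∈ s ∪ -s, a + b ∉ s ∪ -s) : (addCayley s).CliqueFree 3 := by
  classical
  have h0 : (0 : A) ∉ s := fun h => hs 0 (Or.inl h) 0 (Or.inl h) (by rw [add_zero]; exact Or.inl h)
  intro t ht
  obtain ⟨u, v, w, huv, huw, hvw, -⟩ := is3Clique_iff.mp ht
  rw [addCayley_adj_iff_sub_mem h0] at huv huw hvw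
  exact hs _ huv _ hvw (by rwa [sub_add_sub_cancel'])

theorem degree_addCayley [Fintype A] [DecidableEq A] {s : Finset A} (hs : (0 : A) ∉ s) (u : A)
    [Fintype ((addCayley (s : Set A)).neighborSet u)] :
    (addCayley (s : Set A)).degree u = #(s ∪ -s) := by
  have hnbr : (addCayley (s : Set A)).neighborFinset u = (s ∪ -s).map (addLeftEmbedding u) := by
    ext v
    rw [mem_neighborFinset, addCayley_adj_iff_sub_mem (by exact_mod_cast hs), mem_map,
      ← coe_neg, ← coe_union, mem_coe]
    exact ⟨fun h => ⟨v - u, h, add_sub_cancel u v⟩, by rintro ⟨a, ha, rfl⟩; simpa using ha⟩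
  rw [← card_neighborFinset_eq_degree, hnbr, card_map]

theorem isRegularOfDegree_addCayley [Fintype A] [DecidableEq A] {s : Finset A}
    (hs : Disjoint s (-s)) [LocallyFinite (addCayley (s : Set A))] :
    (addCayley (s : Set A)).IsRegularOfDegree (2 * #s) := by
  have h0 : (0 : A) ∉ s := fun h => Finset.disjoint_left.mp hs h (by simpa using h)
  intro u
  rw [degree_addCayley h0, card_union_of_disjoint hs, card_neg, two_mul]

theorem cliqueFree_three_addCayley_of_fst_eq_one {B : Type*} [AddCommGroup B]
    {s : Set (ZMod 5 × B)} (hs : ∀ x ∈ s, x.1 = 1) : (addCayley s).CliqueFree 3 := by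
  have hfst : ∀ x ∈ s ∪ -s, x.1 = 1 ∨ x.1 = -1 := by
    rintro x (hx | hx)
    · exact Or.inl (hs x hx)
    · exact Or.inr (neg_eq_iff_eq_neg.mp (hs _ hx))
  have hsigns : ∀ a b : ZMod 5, (a = 1 ∨ a = -1) → (b = 1 ∨ b = -1) →
      ¬(a + b = 1 ∨ a + b = -1) := by
    decide
  exact cliqueFree_three_addCayley fun a ha b hb hab =>
    hsigns _ _ (hfst a ha) (hfst b hb) (hfst _ hab)

theorem Iso.isRegularOfDegree {V W : Type*} {G : SimpleGraph V} {G' : SimpleGraph W}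
    [LocallyFinite G] [LocallyFinite G'] {d : ℕ} (f : G ≃g G') (h : G.IsRegularOfDegree d) :
    G'.IsRegularOfDegree d := fun w => by
  rw [← f.apply_symm_apply w, f.degree_eq]
  exact h _

end SimpleGraph

theorem Finset.disjoint_neg_of_forall_fst_eq_one {B : Type*} [AddCommGroup B] [DecidableEq B]
    {s : Finset (ZMod 5 × B)} (hs : ∀ x ∈ s, x.1 = 1) : Disjoint s (-s) := by
  refine Finset.disjoint_left.mpr fun x hx hx' => ?_
  have h := hs _ (mem_neg'.mp hx')
  rw [Prod.fst_neg, hs x hx] at h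
  exact absurd h (by decide)

open SimpleGraph

/-- For every positive integer `k` divisible by `5` and every even `r ≤ 2k/5`, there exists
a triangle-free `r`-regular simple graph on `k` vertices. -/
theorem exists_triangle_free_regular_gadget (k r : ℕ) (hk : 0 < k) (hk5 : 5 ∣ k)
    (hr : Even r) (hrk : r ≤ 2 * k / 5) :
    ∃ (G : SimpleGraph (Fin k)) (_ : DecidableRel G.Adj),
      G.CliqueFree 3 ∧ G.IsRegularOfDegree r := by
  classical
  obtain ⟨m, rfl⟩ := hk5
  obtain ⟨n, rfl⟩ := hr
  have : NeZero m := ⟨by omega⟩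
  obtain ⟨T, -, hT⟩ := exists_subset_card_eq (s := (univ : Finset (ZMod m))) (n := n)
    (by rw [card_univ, ZMod.card]; omega)
  let s : Finset (ZMod 5 × ZMod m) := {1} ×ˢ T
  have hfst : ∀ x ∈ s, x.1 = 1 := fun x hx => mem_singleton.mp (mem_product.mp hx).1
  have hs : #s = n := by simp [s, hT]
  have hdisj : Disjoint s (-s) := disjoint_neg_of_forall_fst_eq_one hfst
  have hcard : Fintype.card (ZMod 5 × ZMod m) = 5 * m := by simp [ZMod.card]
  let e := (addCayley (s : Set (ZMod 5 × ZMod m))).overFinIso hcard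
  refine ⟨_, inferInstance,
    (cliqueFree_three_addCayley_of_fst_eq_one fun x hx => hfst x hx).comap e.symm.isContained,
    e.isRegularOfDegree ?_⟩
  simpa only [hs, two_mul] using isRegularOfDegree_addCayley hdisj
end
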